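/- If max over nonempty K ⊆ C of |K|/|N(K)| equals |C|/|S|, then there is a unique balanced server flow, namely the one with α(s) = |C|/|S| for every s ∈ S. -/

import Mathlib

open scoped Classical

/-- The load of server `s` under flow `x`. -/
def load {C S : Type*} [Fintype C] (x : C → S → ℝ) (s : S) : ℝ := ∑ c, x c s

/-- `x` is a server flow: nonnegative, supported on edges, each client sends one unit. -/
def IsServerFlow {C S : Type*} [Fintype S] (Adj : C → S → Prop) (x : C → S → ℝ) : Prop :=
  (∀ c s, 0 ≤ x c s) ∧ (∀ c s, ¬ Adj c s → x c s = 0) ∧ (∀ c, ∑ s, x c s = 1)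

/-- `x` is balanced: each client only sends flow to its minimum-load neighbors. -/
def IsBalanced {C S : Type*} [Fintype C] [Fintype S] (Adj : C → S → Prop)
    (x : C → S → ℝ) : Prop :=
  ∀ c s, 0 < x c s → ∀ s', Adj c s' → load x s ≤ load x s'

/-- The active neighbors `A(c)` of a client `c`: the minimum-load neighbors of `c`. -/
noncomputable def activeN {C S : Type*} [Fintype C] [Fintype S] (Adj : C → S → Prop)
    (x : C → S → ℝ) (c : C) : Finset S :=
  Finset.univ.filter fun s => Adj c s ∧ ∀ s', Adj c s' → load x s ≤ load x s'


/-- The neighborhood in `S` of a set of clients `K`. -/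
noncomputable def NB {C S : Type*} [Fintype S] (Adj : C → S → Prop) (K : Finset C) : Finset S :=
  Finset.univ.filter fun s => ∃ c ∈ K, Adj c s

/-!
Fix a server `s`, let `M` be its load, `T ∋ s` the set of servers loaded at least `M`, and `K`
the set of clients sending flow into `T`. In a balanced flow a client of `K` has a neighbour of
load `≥ M` among its minimum-load neighbours, so `N(K) ⊆ T`; counting the flow into `T` gives
`M |T| ≤ |K| ≤ (|C|/|S|) |N(K)| ≤ (|C|/|S|) |T|`. Hence no load exceeds the average `|C|/|S|`,
and so all loads equal it.

For existence, `|K| |S| ≤ |N(K)| |C|` is Hall's condition for matching `|S|` copies of each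
client injectively to `|C|` copies of its neighbours. Spreading each client evenly over the
servers its copies are matched to loads every server by at most, hence exactly, `|C|/|S|`,
and a flow with constant loads is balanced.
-/

open Finset

section ServerFlows

variable {C S : Type*} {Adj : C → S → Prop} {x : C → S → ℝ}

lemma card_mul_le_card_nb_mul [Fintype S] (hnb : ∀ c, ∃ s, Adj c s) {p q : ℕ} (hp : 0 < p)
    (h : (q / p : ℝ) ∈ upperBounds
      {r : ℝ | ∃ K : Finset C, K.Nonempty ∧ r = (K.card : ℝ) / ((NB Adj K).card : ℝ)})
    (K : Finset C) : #K * p ≤ #(NB Adj K) * q := by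
  obtain rfl | ⟨c, hc⟩ := K.eq_empty_or_nonempty
  · simp
  obtain ⟨s, hs⟩ := hnb c
  have hN : 0 < #(NB Adj K) := card_pos.2 ⟨s, mem_filter.2 ⟨mem_univ _, c, hc, hs⟩⟩
  have hK : (#K : ℝ) / #(NB Adj K) ≤ q / p := h ⟨K, ⟨c, hc⟩, rfl⟩
  rw [div_le_div_iff₀ (by exact_mod_cast hN) (by exact_mod_cast hp), mul_comm (q : ℝ)] at hK
  exact_mod_cast hK

section Assignment

variable {ι : Type*} [Fintype ι] {g : C → ι → S}

noncomputable def flowOfAssignment (g : C → ι → S) (c : C) (s : S) : ℝ :=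
  #{i | g c i = s} / Fintype.card ι

lemma isServerFlow_flowOfAssignment [Fintype S] [Nonempty ι] (hg : ∀ c i, Adj c (g c i)) :
    IsServerFlow Adj (flowOfAssignment g) := by
  refine ⟨fun c s => by unfold flowOfAssignment; positivity, fun c s hcs => ?_, fun c => ?_⟩
  · simp only [flowOfAssignment, div_eq_zero_iff, Nat.cast_eq_zero, card_eq_zero,
      filter_eq_empty_iff]
    exact Or.inl fun i _ h => hcs (h ▸ hg c i)
  · simp only [flowOfAssignment, ← sum_div]
    rw [← Nat.cast_sum, ← card_eq_sum_card_fiberwise fun i _ => mem_univ (g c i)]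
    simp

lemma load_flowOfAssignment [Fintype C] (s : S) :
    load (flowOfAssignment g) s = #{a : C × ι | g a.1 a.2 = s} / Fintype.card ι := by
  simp only [load, flowOfAssignment, ← sum_div, card_filter]
  push_cast
  rw [Fintype.sum_prod_type]

end Assignment

variable [Fintype C]

noncomputable def feeders (x : C → S → ℝ) (T : Finset S) : Finset C :=
  {c | ∃ s ∈ T, 0 < x c s}

noncomputable def loadAtLeast [Fintype S] (x : C → S → ℝ) (M : ℝ) : Finset S :=
  {s | M ≤ load x s}

lemma isBalanced_of_load_eq [Fintype S] {a : ℝ} (h : ∀ s, load x s = a) :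
    IsBalanced Adj x :=
  fun _ s _ s' _ => by rw [h s, h s']

variable [Fintype S]

namespace IsServerFlow

lemma sum_load (hx : IsServerFlow Adj x) : ∑ s, load x s = Fintype.card C := by
  simp only [load]
  rw [sum_comm]
  simp [hx.2.2]

lemma sum_load_le_card_feeders (hx : IsServerFlow Adj x) (T : Finset S) :
    ∑ s ∈ T, load x s ≤ #(feeders x T) :=
  calc ∑ s ∈ T, load x s = ∑ c, ∑ s ∈ T, x c s := sum_comm
    _ = ∑ c ∈ feeders x T, ∑ s ∈ T, x c s := by
        refine (sum_subset (subset_univ _) fun c _ hc => sum_eq_zero fun s hs => ?_).symm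
        exact le_antisymm (not_lt.1 fun h => hc (mem_filter.2 ⟨mem_univ _, s, hs, h⟩))
          (hx.1 c s)
    _ ≤ ∑ _c ∈ feeders x T, (1 : ℝ) :=
        sum_le_sum fun c _ => hx.2.2 c ▸ sum_le_univ_sum_of_nonneg (hx.1 c)
    _ = #(feeders x T) := by simp

lemma load_eq_of_load_le (hx : IsServerFlow Adj x)
    (h : ∀ s, load x s ≤ Fintype.card C / Fintype.card S) (s : S) :
    load x s = Fintype.card C / Fintype.card S := by
  have : Nonempty S := ⟨s⟩
  have hsum : ∑ s, load x s = ∑ _s : S, (Fintype.card C / Fintype.card S : ℝ) := by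
    rw [hx.sum_load, sum_const, card_univ, nsmul_eq_mul]
    field_simp
  exact (sum_eq_sum_iff_of_le fun s _ => h s).1 hsum s (mem_univ s)

end IsServerFlow

namespace IsBalanced

lemma nb_feeders_subset (hb : IsBalanced Adj x) (M : ℝ) :
    NB Adj (feeders x (loadAtLeast x M)) ⊆ loadAtLeast x M := by
  intro s hs
  obtain ⟨c, hc, hcs⟩ := (mem_filter.1 hs).2
  obtain ⟨t, ht, hct⟩ := (mem_filter.1 hc).2
  exact mem_filter.2 ⟨mem_univ _, (mem_filter.1 ht).2.trans (hb c t hct s hcs)⟩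

lemma load_le (hb : IsBalanced Adj x) (hx : IsServerFlow Adj x) {p q : ℕ} (hp : 0 < p)
    (hHall : ∀ K : Finset C, #K * p ≤ #(NB Adj K) * q) (s : S) : load x s ≤ q / p := by
  set M := load x s
  set T := loadAtLeast x M
  set K := feeders x T
  have hTK : M * #T ≤ #K :=
    calc M * #T = ∑ _t ∈ T, M := by simp [mul_comm]
      _ ≤ ∑ t ∈ T, load x t := sum_le_sum fun t ht => (mem_filter.1 ht).2
      _ ≤ #K := hx.sum_load_le_card_feeders T
  have hNT : #(NB Adj K) ≤ #T := card_le_card (hb.nb_feeders_subset M)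
  have hT : (0 : ℝ) < #T := by exact_mod_cast card_pos.2 ⟨s, by simp [T, M, loadAtLeast]⟩
  rw [le_div_iff₀ (by exact_mod_cast hp)]
  refine le_of_mul_le_mul_right ?_ hT
  calc M * p * #T = M * #T * p := by ring
    _ ≤ #K * p := by gcongr
    _ ≤ #(NB Adj K) * q := by exact_mod_cast hHall K
    _ ≤ q * #T := by rw [mul_comm]; gcongr

end IsBalanced

lemma exists_injective_blowup {p q : ℕ} (hHall : ∀ K : Finset C, #K * p ≤ #(NB Adj K) * q) :
    ∃ f : C × Fin p → S × Fin q, Function.Injective f ∧ ∀ a, Adj a.1 (f a).1 := by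
  have hall : ∀ A : Finset (C × Fin p),
      #A ≤ #(A.biUnion fun a => ({b | Adj a.1 b.1} : Finset (S × Fin q))) := by
    intro A
    have hN : A.biUnion (fun a => ({b | Adj a.1 b.1} : Finset (S × Fin q))) =
        NB Adj (A.image Prod.fst) ×ˢ univ := by
      ext b
      simp [NB]
    calc #A ≤ #(A.image Prod.fst ×ˢ (univ : Finset (Fin p))) :=
          card_le_card fun a ha => mem_product.2 ⟨mem_image_of_mem _ ha, mem_univ _⟩
      _ = #(A.image Prod.fst) * p := by simp
      _ ≤ #(NB Adj (A.image Prod.fst)) * q := hHall _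
      _ = _ := by rw [hN]; simp
  obtain ⟨f, hf, hadj⟩ := (all_card_le_biUnion_card_iff_exists_injective _).1 hall
  exact ⟨f, hf, fun a => (mem_filter.1 (hadj a)).2⟩

lemma exists_isServerFlow_load_le {p q : ℕ} (hp : 0 < p)
    (hHall : ∀ K : Finset C, #K * p ≤ #(NB Adj K) * q) :
    ∃ x, IsServerFlow Adj x ∧ ∀ s, load x s ≤ q / p := by
  obtain ⟨f, hf, hadj⟩ := exists_injective_blowup hHall
  have : Nonempty (Fin p) := ⟨⟨0, hp⟩⟩
  refine ⟨flowOfAssignment fun c i => (f (c, i)).1,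
    isServerFlow_flowOfAssignment fun c i => hadj (c, i), fun s => ?_⟩
  rw [load_flowOfAssignment, Fintype.card_fin]
  gcongr
  calc #{a : C × Fin p | (f a).1 = s} ≤ #(univ : Finset (Fin q)) :=
        card_le_card_of_injOn (fun a => (f a).2) (fun _ _ => mem_univ _)
          fun a ha b hb hab =>
            hf (Prod.ext ((mem_filter.1 ha).2.trans (mem_filter.1 hb).2.symm) hab)
    _ = q := by simp

end ServerFlows

/-- If the maximum of `|K|/|N(K)|` over nonempty `K ⊆ C` equals `|C|/|S|`, then a
balanced server flow exists, every balanced server flow has `α(s) = |C|/|S|` for all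
`s`, and in particular the balanced load function is unique. -/
theorem stmt_4 {C S : Type*} [Fintype C] [Fintype S] [Nonempty C]
    (Adj : C → S → Prop)
    (hnb : ∀ c : C, ∃ s, Adj c s)
    (hmax : IsGreatest
      {r : ℝ | ∃ K : Finset C, K.Nonempty ∧ r = (K.card : ℝ) / ((NB Adj K).card : ℝ)}
      ((Fintype.card C : ℝ) / (Fintype.card S : ℝ))) :
    (∃ x : C → S → ℝ, IsServerFlow Adj x ∧ IsBalanced Adj x) ∧
    (∀ x : C → S → ℝ, IsServerFlow Adj x → IsBalanced Adj x →
      ∀ s, load x s = (Fintype.card C : ℝ) / (Fintype.card S : ℝ)) := by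
  have hp : 0 < Fintype.card S := Fintype.card_pos_iff.2 ⟨(hnb (Classical.arbitrary C)).choose⟩
  have hHall := card_mul_le_card_nb_mul hnb hp hmax.2
  refine ⟨?_, fun x hx hb => hx.load_eq_of_load_le (hb.load_le hx hp hHall)⟩
  obtain ⟨x, hx, hle⟩ := exists_isServerFlow_load_le hp hHall
  exact ⟨x, hx, isBalanced_of_load_eq (hx.load_eq_of_load_le hle)⟩
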